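/- arXiv:2409.11846 — 5 statements merged into one kernel-verified Lean document; each statement's English description precedes it below -/
import Mathlib

section
/- Let X be a topological space and let G be the subgroup of bounded functions X → ℤ consisting of all functions of the form h + n·𝟙, where h is a bounded residual function, n ∈ ℤ, and 𝟙 is the constant function 1. Then G is a Specker group: for every f ∈ G and every n ∈ ℤ, the characteristic function of f⁻¹(n) belongs to G. -/
/-- A function `f : X → ℤ` on a topological space is *residual* if `f⁻¹(0)`
contains an open dense subset of `X`. -/
def IsResidualFn {X : Type*} [TopologicalSpace X] (f : X → ℤ) : Prop :=
  ∃ U : Set X, IsOpen U ∧ Dense U ∧ U ⊆ f ⁻¹' {0}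

/-- A function `f : X → ℤ` is *bounded* if `|f x| ≤ N` for some `N`. -/
def IsBoundedFn {X : Type*} (f : X → ℤ) : Prop :=
  ∃ N : ℤ, ∀ x : X, |f x| ≤ N

/-- Membership in the group `G = QZ_b(X) + ℤ·𝟙`: `f = h + n·𝟙` with `h` a bounded
residual function and `n ∈ ℤ`. -/
def MemG {X : Type*} [TopologicalSpace X] (f : X → ℤ) : Prop :=
  ∃ (h : X → ℤ) (n : ℤ), IsResidualFn h ∧ IsBoundedFn h ∧ f = h + Function.const X n

/-!
`G` consists exactly of the bounded functions that are constant on some open dense set.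
That description is visibly stable under post-composition with any `φ : ℤ → ℤ`
(a bounded `f` takes only finitely many values, so `φ ∘ f` is again bounded),
and `χ_{f⁻¹(n)}` is such a composite.
-/

open Function Set

section Bounded

variable {X : Type*}

theorem IsBoundedFn.add {f g : X → ℤ} (hf : IsBoundedFn f) (hg : IsBoundedFn g) :
    IsBoundedFn (f + g) := by
  obtain ⟨M, hM⟩ := hf
  obtain ⟨N, hN⟩ := hg
  exact ⟨M + N, fun x => (abs_add_le _ _).trans (add_le_add (hM x) (hN x))⟩

theorem isBoundedFn_const (c : ℤ) : IsBoundedFn (const X c) :=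
  ⟨|c|, fun _ => le_rfl⟩

theorem IsBoundedFn.comp {f : X → ℤ} (hf : IsBoundedFn f) (φ : ℤ → ℤ) :
    IsBoundedFn (φ ∘ f) := by
  obtain ⟨N, hN⟩ := hf
  refine ⟨∑ k ∈ Finset.Icc (-N) N, |φ k|, fun x => ?_⟩
  exact Finset.single_le_sum (fun k _ => abs_nonneg (φ k)) (Finset.mem_Icc.2 (abs_le.1 (hN x)))

end Bounded

section Residual

variable {X : Type*} [TopologicalSpace X]

theorem memG_iff {f : X → ℤ} :
    MemG f ↔ IsBoundedFn f ∧ ∃ U : Set X, IsOpen U ∧ Dense U ∧ ∃ c, EqOn f (const X c) U := by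
  constructor
  · rintro ⟨h, m, ⟨U, hU, hD, hzero⟩, hh, rfl⟩
    refine ⟨hh.add (isBoundedFn_const m), U, hU, hD, m, fun x hx => ?_⟩
    simp [show h x = 0 from hzero hx]
  · rintro ⟨hf, U, hU, hD, c, hc⟩
    refine ⟨f + const X (-c), c, ⟨U, hU, hD, fun x hx => ?_⟩, hf.add (isBoundedFn_const _), ?_⟩
    · simp [hc hx]
    · ext x
      simp

theorem MemG.comp {f : X → ℤ} (hf : MemG f) (φ : ℤ → ℤ) : MemG (φ ∘ f) := by
  obtain ⟨hb, U, hU, hD, c, hc⟩ := memG_iff.1 hf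
  refine memG_iff.2 ⟨hb.comp φ, U, hU, hD, φ c, fun x hx => ?_⟩
  simp [hc hx]

end Residual

/-- The group `G = QZ_b(X) + ℤ·𝟙` is a Specker group: for every `f ∈ G` and every
`n ∈ ℤ`, the characteristic function of `f⁻¹(n)` belongs to `G`. -/
theorem specker_residual_plus_constants {X : Type*} [TopologicalSpace X]
    (f : X → ℤ) (hf : MemG f) (n : ℤ) :
    MemG (fun x => if f x = n then (1 : ℤ) else 0) :=
  hf.comp fun k => if k = n then 1 else 0
end

section
/- Let X be a topological space and let G' be the subgroup of bounded functions X → ℤ consisting of all functions of the form h + g, where h is a bounded residual function and g is a bounded continuous function (ℤ discrete). Then G' is a Specker group: for every f ∈ G' and every n ∈ ℤ, the characteristic function of f⁻¹(n) belongs to G'. -/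
/-- Membership in the group `G' = QZ_b(X) + C_b(X,ℤ)`: `f = h + g` with `h` a bounded
residual function and `g` a bounded continuous function (`ℤ` discrete). -/
def MemG' {X : Type*} [TopologicalSpace X] (f : X → ℤ) : Prop :=
  ∃ h g : X → ℤ, IsResidualFn h ∧ IsBoundedFn h ∧ Continuous g ∧ IsBoundedFn g ∧
    f = h + g

/-- The group `G' = QZ_b(X) + C_b(X,ℤ)` is a Specker group: for every `f ∈ G'` and
every `n ∈ ℤ`, the characteristic function of `f⁻¹(n)` belongs to `G'`. -/
theorem specker_residual_plus_continuous {X : Type*} [TopologicalSpace X]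
    (f : X → ℤ) (hf : MemG' f) (n : ℤ) :
    MemG' (fun x => if f x = n then (1 : ℤ) else 0) := by
  obtain ⟨h, g, ⟨U, hUopen, hUdense, hU0⟩, _, hgc, _, hfeq⟩ := hf
  refine ⟨(fun x => if f x = n then (1 : ℤ) else 0) - (fun x => if g x = n then (1 : ℤ) else 0),
    fun x => if g x = n then (1 : ℤ) else 0, ⟨U, hUopen, hUdense, ?_⟩, ⟨2, ?_⟩,
    ?_, ⟨1, ?_⟩, by ext x; simp⟩
  · intro x hx
    have h0 : h x = 0 := hU0 hx
    have : f x = g x := by rw [hfeq]; simp [h0]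
    simp [this]
  · intro x
    dsimp only [Pi.sub_apply]
    split <;> split <;> norm_num
  · exact (continuous_of_discreteTopology (f := fun m : ℤ => if m = n then (1:ℤ) else 0)).comp hgc
  · intro x; dsimp only; split <;> norm_num
end

section
/- Let X be a topological space. The quotient group B(X,ℤ)/QZ_b(X) of the group of all bounded functions X → ℤ by the subgroup of bounded residual functions is a free abelian group. -/
/-- `B(X,ℤ)`: the group of all bounded functions `X → ℤ`, as a subgroup of `X → ℤ`. -/
def boundedFns (X : Type*) : AddSubgroup (X → ℤ) where
  carrier := {f | ∃ N : ℤ, ∀ x, |f x| ≤ N}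
  add_mem' := by
    rintro f g ⟨N, hN⟩ ⟨M, hM⟩
    exact ⟨N + M, fun x => (abs_add_le _ _).trans (add_le_add (hN x) (hM x))⟩
  zero_mem' := ⟨0, fun x => by simp⟩
  neg_mem' := by
    rintro f ⟨N, hN⟩
    exact ⟨N, fun x => by simpa using hN x⟩

/-- `QZ_b(X)`: the group of bounded residual functions, as a subgroup of `X → ℤ`. -/
def residualBoundedFns (X : Type*) [TopologicalSpace X] : AddSubgroup (X → ℤ) where
  carrier := {f | IsResidualFn f ∧ f ∈ boundedFns X}
  add_mem' := by
    rintro f g ⟨⟨U, hU, hUd, hUf⟩, hfb⟩ ⟨⟨V, hV, hVd, hVg⟩, hgb⟩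
    refine ⟨⟨U ∩ V, hU.inter hV, hUd.inter_of_isOpen_left hVd hU, fun x hx => ?_⟩,
      add_mem hfb hgb⟩
    have h1 : f x = 0 := hUf hx.1
    have h2 : g x = 0 := hVg hx.2
    simp [h1, h2]
  zero_mem' := ⟨⟨Set.univ, isOpen_univ, dense_univ, fun x _ => rfl⟩,
    zero_mem (boundedFns X)⟩
  neg_mem' := by
    rintro f ⟨⟨U, hU, hUd, hUf⟩, hfb⟩
    refine ⟨⟨U, hU, hUd, fun x hx => ?_⟩, neg_mem hfb⟩
    have h1 : f x = 0 := hUf hx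
    simp [h1]
/-!
Sending a bounded `f : α → ℤ` to its limits along ultrafilters identifies `B(α,ℤ)` with the
locally constant functions on the Stone–Čech compactification `Ultrafilter α`. Restricting to the
closed set `Y` of ultrafilters finer than a filter `F` kills exactly the functions vanishing
`F`-eventually (every set not in `F` misses some ultrafilter finer than `F`), and is surjective
because every clopen subset of `Y` is cut out by a subset of `α` (compactness). So `B(α,ℤ)` modulo
the `F`-eventually zero functions is `LocallyConstant Y ℤ` with `Y` profinite, a free group by
Nöbeling's theorem. Residual functions are those vanishing along the filter of sets containing a
dense open set.
-/
open Set Filter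

section

variable {α : Type*}

theorem indicator_one_mem_boundedFns (s : Set α) : s.indicator 1 ∈ boundedFns α :=
  ⟨1, fun x => by by_cases hx : x ∈ s <;> simp [hx]⟩

namespace Ultrafilter

/-- The value that `f` takes on some member of `U`: it exists when `f` is bounded, and is a junk
`0` otherwise. -/
noncomputable def limInt (U : Ultrafilter α) (f : α → ℤ) : ℤ :=
  open Classical in
  if h : ∃ m : ℤ, f ⁻¹' {m} ∈ U then h.choose else 0

theorem exists_preimage_singleton_mem {f : α → ℤ} (hf : f ∈ boundedFns α)
    (U : Ultrafilter α) : ∃ m : ℤ, f ⁻¹' {m} ∈ U := by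
  obtain ⟨N, hN⟩ := hf
  have hIcc : f ⁻¹' Icc (-N) N ∈ U := univ_mem' fun x => abs_le.1 (hN x)
  obtain ⟨m, -, hm⟩ := (U.map f).eq_pure_of_finite_mem (finite_Icc (-N) N) hIcc
  exact ⟨m, by rw [← mem_map, hm]; rfl⟩

theorem limInt_eq_iff {f : α → ℤ} (hf : f ∈ boundedFns α) {U : Ultrafilter α} {m : ℤ} :
    U.limInt f = m ↔ f ⁻¹' {m} ∈ U := by
  have h := exists_preimage_singleton_mem hf U
  have hlim : f ⁻¹' {U.limInt f} ∈ U := by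
    rw [limInt, dif_pos h]
    exact h.choose_spec
  refine ⟨fun h => h ▸ hlim, fun hm => ?_⟩
  obtain ⟨x, hx, hx'⟩ := U.nonempty_of_mem (inter_mem hlim hm)
  exact hx.symm.trans hx'

theorem limInt_add {f g : α → ℤ} (hf : f ∈ boundedFns α) (hg : g ∈ boundedFns α)
    (U : Ultrafilter α) : U.limInt (f + g) = U.limInt f + U.limInt g := by
  refine (limInt_eq_iff (add_mem hf hg)).2 (mem_of_superset
    (inter_mem ((limInt_eq_iff hf).1 rfl) ((limInt_eq_iff hg).1 rfl)) ?_)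
  rintro x ⟨hfx, hgx⟩
  simp_all

theorem exists_subset_setOf_mem_subset {K O : Set (Ultrafilter α)} (hK : IsCompact K)
    (hO : IsOpen O) (hKO : K ⊆ O) : ∃ s : Set α, K ⊆ {U | s ∈ U} ∧ {U | s ∈ U} ⊆ O := by
  have hcover : K ⊆ ⋃ s : {s : Set α // {U | s ∈ U} ⊆ O}, {U | s.1 ∈ U} := fun U hU => by
    obtain ⟨_, ⟨s, rfl⟩, hs, hsO⟩ := ultrafilterBasis_is_basis.exists_subset_of_mem_open (hKO hU) hO
    exact mem_iUnion.2 ⟨⟨s, hsO⟩, hs⟩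
  have hdir : Directed (α := Set (Ultrafilter α)) (· ⊆ ·)
      fun s : {s : Set α // {U | s ∈ U} ⊆ O} => {U | s.1 ∈ U} :=
    fun s t => ⟨⟨s.1 ∪ t.1, fun U hU => (union_mem_iff.1 hU).elim (s.2 ·) (t.2 ·)⟩,
      fun _ hU => mem_of_superset hU subset_union_left,
      fun _ hU => mem_of_superset hU subset_union_right⟩
  have : Nonempty {s : Set α // {U | s ∈ U} ⊆ O} := ⟨⟨∅, fun U hU => absurd hU U.empty_notMem⟩⟩
  obtain ⟨⟨s, hsO⟩, hKs⟩ :=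
    hK.elim_directed_cover _ (fun _ => ultrafilter_isOpen_basic _) hcover hdir
  exact ⟨s, hKs, hsO⟩

theorem exists_eq_setOf_mem_of_isClopen {Y : Set (Ultrafilter α)} (hY : IsClosed Y) {C : Set Y}
    (hC : IsClopen C) : ∃ s : Set α, C = {U : Y | s ∈ (U : Ultrafilter α)} := by
  obtain ⟨O, hO, rfl⟩ := isOpen_induced_iff.1 hC.isOpen
  have hK : IsCompact (((↑) : Y → Ultrafilter α) '' ((↑) ⁻¹' O)) :=
    (hY.isClosedEmbedding_subtypeVal.isClosedMap _ hC.isClosed).isCompact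
  obtain ⟨s, hKs, hsO⟩ := exists_subset_setOf_mem_subset hK hO (image_preimage_subset _ _)
  exact ⟨s, Subset.antisymm (fun U hU => hKs (mem_image_of_mem _ hU)) fun U hU => hsO hU⟩

open Classical in
theorem limInt_indicator_one (s : Set α) (U : Ultrafilter α) :
    U.limInt (s.indicator 1) = if s ∈ U then 1 else 0 := by
  rw [limInt_eq_iff (indicator_one_mem_boundedFns s)]
  split_ifs with hs
  · exact mem_of_superset hs fun x hx => by simp [hx]
  · exact mem_of_superset (compl_mem_iff_notMem.2 hs) fun x hx => by simp [show x ∉ s from hx]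

end Ultrafilter

/-- The ultrafilters finer than `F`: the Stone space of the Boolean algebra `Set α` modulo `F`. -/
def ultrafiltersLE (F : Filter α) : Set (Ultrafilter α) :=
  {U | ↑U ≤ F}

theorem isClosed_ultrafiltersLE (F : Filter α) : IsClosed (ultrafiltersLE F) := by
  have : ultrafiltersLE F = ⋂ s ∈ F, {U : Ultrafilter α | s ∈ U} := by
    ext U
    simp only [ultrafiltersLE, mem_ofPred_eq, mem_iInter]
    exact ⟨fun h s hs => h hs, fun h s hs => h s hs⟩
  rw [this]
  exact isClosed_biInter fun s _ => ultrafilter_isClosed_basic s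

instance (F : Filter α) : CompactSpace (ultrafiltersLE F) :=
  isCompact_iff_compactSpace.1 (isClosed_ultrafiltersLE F).isCompact

section limHom

variable (F : Filter α)

noncomputable def boundedFnsLimHom : boundedFns α →+ LocallyConstant (ultrafiltersLE F) ℤ where
  toFun f :=
    { toFun := fun U => U.1.limInt f
      isLocallyConstant := IsLocallyConstant.iff_isOpen_fiber.2 fun m => by
        have : (fun U : ultrafiltersLE F => U.1.limInt f) ⁻¹' {m} =
            (↑) ⁻¹' {U : Ultrafilter α | (f : α → ℤ) ⁻¹' {m} ∈ U} := by
          ext U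
          exact Ultrafilter.limInt_eq_iff f.2
        rw [this]
        exact (ultrafilter_isOpen_basic _).preimage continuous_subtype_val }
  map_zero' := by
    ext U
    exact (Ultrafilter.limInt_eq_iff (zero_mem _)).2 (univ_mem' fun _ => rfl)
  map_add' f g := by
    ext U
    exact Ultrafilter.limInt_add f.2 g.2 U.1

variable {F}

theorem boundedFnsLimHom_apply (f : boundedFns α) (U : ultrafiltersLE F) :
    boundedFnsLimHom F f U = U.1.limInt f :=
  rfl

theorem mem_ker_boundedFnsLimHom {f : boundedFns α} :
    f ∈ (boundedFnsLimHom F).ker ↔ (f : α → ℤ) =ᶠ[F] 0 := by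
  calc f ∈ (boundedFnsLimHom F).ker ↔ ∀ U : ultrafiltersLE F, U.1.limInt f = 0 := by
        rw [AddMonoidHom.mem_ker, LocallyConstant.ext_iff]; rfl
    _ ↔ ∀ U : Ultrafilter α, ↑U ≤ F → (f : α → ℤ) ⁻¹' {0} ∈ U := by
        simp only [Subtype.forall, Ultrafilter.limInt_eq_iff f.2]; rfl
    _ ↔ (f : α → ℤ) =ᶠ[F] 0 := Filter.mem_iff_ultrafilter.symm

theorem boundedFnsLimHom_surjective : Function.Surjective (boundedFnsLimHom F) := by
  intro g
  choose s hs using fun m : ℤ => Ultrafilter.exists_eq_setOf_mem_of_isClopen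
    (isClosed_ultrafiltersLE F) (g.isLocallyConstant.isClopen_fiber m)
  let ind (m : ℤ) : boundedFns α := ⟨(s m).indicator 1, indicator_one_mem_boundedFns _⟩
  refine ⟨∑ m ∈ g.range_finite.toFinset, m • ind m, ?_⟩
  ext U
  have hmem (m : ℤ) : s m ∈ U.1 ↔ g U = m := (Set.ext_iff.1 (hs m) U).symm
  change LocallyConstant.evalAddMonoidHom U (boundedFnsLimHom F (∑ m ∈ _, m • ind m)) = g U
  rw [map_sum, map_sum]
  simp only [map_zsmul, LocallyConstant.evalAddMonoidHom_apply, boundedFnsLimHom_apply, ind,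
    Ultrafilter.limInt_indicator_one, hmem, smul_eq_mul, mul_ite, mul_one, mul_zero]
  rw [Finset.sum_ite_eq, if_pos (g.range_finite.mem_toFinset.2 (mem_range_self U))]

end limHom

theorem free_boundedFns_quotient (F : Filter α) (H : AddSubgroup (boundedFns α))
    (hH : ∀ f, f ∈ H ↔ (f : α → ℤ) =ᶠ[F] 0) : Module.Free ℤ (boundedFns α ⧸ H) := by
  have hker : (boundedFnsLimHom F).ker = H := by
    ext f
    rw [mem_ker_boundedFnsLimHom, hH]
  let e : boundedFns α ⧸ H ≃+ LocallyConstant (ultrafiltersLE F) ℤ :=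
    (QuotientAddGroup.quotientAddEquivOfEq hker.symm).trans
      (QuotientAddGroup.quotientKerEquivOfSurjective _ boundedFnsLimHom_surjective)
  have : TotallyDisconnectedSpace (ultrafiltersLE F) := Subtype.totallyDisconnectedSpace
  have := LocallyConstant.freeOfProfinite (Profinite.of (ultrafiltersLE F))
  exact Module.Free.of_equiv e.symm.toIntLinearEquiv

end

def denseOpenFilter (X : Type*) [TopologicalSpace X] : Filter X where
  sets := {s | ∃ U, IsOpen U ∧ Dense U ∧ U ⊆ s}
  univ_sets := ⟨univ, isOpen_univ, dense_univ, subset_univ _⟩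
  sets_of_superset := fun ⟨U, hU, hUd, hUs⟩ hst => ⟨U, hU, hUd, hUs.trans hst⟩
  inter_sets := fun ⟨U, hU, hUd, hUs⟩ ⟨V, hV, hVd, hVt⟩ =>
    ⟨U ∩ V, hU.inter hV, hUd.inter_of_isOpen_left hVd hU, inter_subset_inter hUs hVt⟩

theorem isResidualFn_iff_eventuallyEq_zero {X : Type*} [TopologicalSpace X] {f : X → ℤ} :
    IsResidualFn f ↔ f =ᶠ[denseOpenFilter X] 0 :=
  Iff.rfl

/-- The quotient `B(X,ℤ)/QZ_b(X)` is a free abelian group. -/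
theorem quotient_bounded_by_residual_free (X : Type*) [TopologicalSpace X] :
    Module.Free ℤ
      (boundedFns X ⧸ (residualBoundedFns X).addSubgroupOf (boundedFns X)) :=
  free_boundedFns_quotient (denseOpenFilter X) _ fun f =>
    AddSubgroup.mem_addSubgroupOf.trans <|
      (and_iff_left f.2).trans isResidualFn_iff_eventuallyEq_zero
end

section
/- Let D be a Prüfer domain and let P be a nonzero prime ideal of D with P ≠ P². Then Q := ⋂_{n ≥ 1} Pⁿ is a prime ideal of D, and Q is the largest prime ideal of D properly contained in P (i.e., every prime ideal of D properly contained in P is contained in Q). -/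
/-!
Everything is checked after localizing at the maximal ideals `m ⊇ P`, where `D_m` is a valuation
ring and ideals are totally ordered. There a prime `q` not containing `y` satisfies `q ≤ (y) q`;
consequently powers of primes are primary, and a prime `Q'` missing some `s ∈ P` satisfies
`Q' ≤ P Q'`, hence `Q' ≤ Pⁿ` for all `n`. Since `Pᵏ` is primary, `b ∉ Pᵏ` persists in `D_m`,
where `y ∉ J ≤ (y)` lets `y` be cancelled from `x y ∈ I J`; this gives primality of `⋂ Pⁿ`.
Finally `⋂ Pⁿ ≠ P` because `P ≠ P²`.
-/

open Ideal

theorem Ideal.mem_of_mul_mem_span_singleton_mul {R : Type*} [CommRing R] [IsDomain R]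
    {I : Ideal R} {x y : R} (hy : y ≠ 0) (h : x * y ∈ span {y} * I) : x ∈ I := by
  rw [← span_singleton_le_iff_mem, ← span_singleton_mul_right_mono hy,
    span_singleton_mul_span_singleton, mul_comm y x, span_singleton_le_iff_mem]
  exact h

namespace ValuationRing

variable {V : Type*} [CommRing V] [IsDomain V] [ValuationRing V]

theorem le_span_singleton_mul_of_notMem {q : Ideal V} [hq : q.IsPrime] {y : V} (hy : y ∉ q) :
    q ≤ span {y} * q := by
  intro z hz
  obtain ⟨c, rfl | rfl⟩ := ValuationRing.cond y z
  · exact mem_span_singleton_mul.mpr ⟨c, (hq.mem_or_mem hz).resolve_left hy, rfl⟩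
  · exact absurd (q.mul_mem_right c hz) hy

theorem mem_pow_of_mul_mem_pow {p : Ideal V} [p.IsPrime] {x y : V} (hy : y ∉ p) {n : ℕ}
    (hn : n ≠ 0) (h : x * y ∈ p ^ n) : x ∈ p ^ n := by
  obtain ⟨k, rfl⟩ := Nat.exists_eq_succ_of_ne_zero hn
  have hle : p ^ (k + 1) ≤ span {y} * p ^ (k + 1) := by
    rw [pow_succ', ← mul_assoc]
    exact mul_mono_left (le_span_singleton_mul_of_notMem hy)
  exact mem_of_mul_mem_span_singleton_mul (by rintro rfl; exact hy p.zero_mem) (hle h)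

theorem mem_of_mul_mem_mul {I J : Ideal V} {x y : V} (hy : y ∉ J) (h : x * y ∈ I * J) :
    x ∈ I := by
  have hJ : J ≤ span {y} := (Std.Total.total (r := (· ≤ ·)) (span {y}) J).resolve_left
    fun hyJ => hy (hyJ (mem_span_singleton_self y))
  refine mem_of_mul_mem_span_singleton_mul (y := y) (by rintro rfl; exact hy J.zero_mem) ?_
  rw [mul_comm (span {y})]
  exact mul_mono_right hJ h

theorem le_pow_of_mem_of_notMem {p q : Ideal V} [q.IsPrime] {s : V} (hsp : s ∈ p) (hsq : s ∉ q)
    (n : ℕ) : q ≤ p ^ n := by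
  have hq : q ≤ p * q := (le_span_singleton_mul_of_notMem hsq).trans
    (mul_mono_left ((span_singleton_le_iff_mem p).mpr hsp))
  induction n with
  | zero => simp
  | succ n ih =>
    calc q ≤ p * q := hq
      _ ≤ p * p ^ n := mul_mono_right ih
      _ = p ^ (n + 1) := (pow_succ' p n).symm

end ValuationRing

section LocalGlobal

variable {R : Type*} [CommRing R]

theorem Ideal.mem_of_localization_maximal_of_le {J : Ideal R} {x : R}
    (h : ∀ (m : Ideal R) [m.IsMaximal], J ≤ m →
      algebraMap R (Localization.AtPrime m) x ∈ J.map (algebraMap R (Localization.AtPrime m))) :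
    x ∈ J :=
  mem_of_localization_maximal fun m _ => by
    by_cases hJm : J ≤ m
    · exact h m hJm
    · simp [IsLocalization.AtPrime.map_eq_top_of_not_le _ hJm]

theorem Ideal.IsPrimary.algebraMap_mem_map_atPrime_iff {I q : Ideal R} [q.IsPrime]
    (hI : I.IsPrimary) (hIq : I ≤ q) {x : R} :
    algebraMap R (Localization.AtPrime q) x ∈ I.map (algebraMap R (Localization.AtPrime q)) ↔
      x ∈ I := by
  have hdisj : Disjoint (q.primeCompl : Set R) I := by
    simp [Ideal.primeCompl, ← le_compl_iff_disjoint_left, hIq]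
  rw [← mem_comap, ← under_def,
    IsLocalization.under_map_of_isPrimary_disjoint q.primeCompl _ hI hdisj]

end LocalGlobal

namespace Prufer

variable {D : Type*} [CommRing D] [IsDomain D]
  (hD : ∀ (m : Ideal D) [m.IsMaximal], ValuationRing (Localization.AtPrime m))
include hD

theorem isPrimary_pow {P : Ideal D} [hP : P.IsPrime] {n : ℕ} (hn : n ≠ 0) :
    (P ^ n).IsPrimary := by
  rw [isPrimary_iff, radical_pow P hn, hP.radical]
  refine ⟨fun h => hP.ne_top (top_le_iff.mp (h ▸ pow_le_self hn)),
    fun {x y} hxy => or_iff_not_imp_right.mpr fun hy => ?_⟩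
  refine mem_of_localization_maximal_of_le fun m _ hm => ?_
  have := hD m
  have hPm : P ≤ m := IsPrime.le_of_pow_le hm
  have := isPrime_map_of_isLocalizationAtPrime m (S := Localization.AtPrime m) hPm
  rw [Ideal.map_pow]
  refine ValuationRing.mem_pow_of_mul_mem_pow
    (mt (hP.isPrimary.algebraMap_mem_map_atPrime_iff hPm).mp hy) hn ?_
  rw [← map_mul, ← Ideal.map_pow]
  exact mem_map_of_mem _ hxy

theorem isPrime_iInf_pow {P : Ideal D} [hP : P.IsPrime] : (⨅ n ≥ 1, P ^ n).IsPrime := by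
  refine ⟨fun h => hP.ne_top (top_le_iff.mp (h ▸ (iInf₂_le 1 le_rfl).trans_eq (pow_one P))),
    fun {a b} hab => or_iff_not_imp_right.mpr fun hb => ?_⟩
  simp only [Submodule.mem_iInf] at hab hb ⊢
  push Not at hb
  obtain ⟨k, hk, hbk⟩ := hb
  intro n hn
  refine mem_of_localization_maximal_of_le fun m _ hm => ?_
  have := hD m
  have hPkm : P ^ k ≤ m := pow_le_self (by omega) |>.trans (IsPrime.le_of_pow_le hm)
  refine ValuationRing.mem_of_mul_mem_mul
    (mt ((isPrimary_pow hD (by omega)).algebraMap_mem_map_atPrime_iff hPkm).mp hbk) ?_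
  rw [← map_mul, ← Ideal.map_mul, ← pow_add]
  exact mem_map_of_mem _ (hab (n + k) (by omega))

theorem le_pow_of_lt {P Q : Ideal D} [hQ : Q.IsPrime] (hQP : Q < P) (n : ℕ) : Q ≤ P ^ n := by
  obtain ⟨s, hsP, hsQ⟩ := SetLike.exists_of_lt hQP
  intro x hx
  refine mem_of_localization_maximal_of_le fun m _ hm => ?_
  have := hD m
  have hQm : Q ≤ m := hQP.le.trans (IsPrime.le_of_pow_le hm)
  have := isPrime_map_of_isLocalizationAtPrime m (S := Localization.AtPrime m) hQm
  rw [Ideal.map_pow]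
  exact ValuationRing.le_pow_of_mem_of_notMem (mem_map_of_mem _ hsP)
    (mt (hQ.isPrimary.algebraMap_mem_map_atPrime_iff hQm).mp hsQ) n (mem_map_of_mem _ hx)

end Prufer

theorem inf_pow_prime_of_prufer_general (D : Type*) [CommRing D] [IsDomain D]
    (hPruf : ∀ (P : Ideal D) (hP : P.IsPrime),
      ValuationRing (@Localization.AtPrime D _ P hP))
    (P : Ideal D) (hP : P.IsPrime) (hPsq : P ≠ P ^ 2)
    (Q : Ideal D) (hQ : Q = ⨅ n ≥ 1, P ^ n) :
    Q.IsPrime ∧ Q < P ∧ ∀ Q' : Ideal D, Q'.IsPrime → Q' < P → Q' ≤ Q := by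
  subst hQ
  have hD : ∀ (m : Ideal D) [m.IsMaximal], ValuationRing (Localization.AtPrime m) :=
    fun m _ => hPruf m inferInstance
  have hQP : ⨅ n ≥ 1, P ^ n ≤ P := (iInf₂_le 1 le_rfl).trans_eq (pow_one P)
  have hPQ : ¬ P ≤ ⨅ n ≥ 1, P ^ n := fun h =>
    hPsq (le_antisymm (h.trans (iInf₂_le 2 one_le_two)) (pow_le_self two_ne_zero))
  exact ⟨Prufer.isPrime_iInf_pow hD, lt_of_le_not_ge hQP hPQ,
    fun Q' _ hQ'P => le_iInf₂ fun n _ => Prufer.le_pow_of_lt hD hQ'P n⟩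

/-- Let `D` be a Prüfer domain (an integral domain all of whose localizations at
primes are valuation domains) and `P` a nonzero non-idempotent prime ideal.
Then `Q = ⋂_{n ≥ 1} Pⁿ` is prime, and it is the largest prime ideal properly
contained in `P`. -/
theorem inf_pow_prime_of_prufer (D : Type*) [CommRing D] [IsDomain D]
    (hPruf : ∀ (P : Ideal D) (hP : P.IsPrime),
      ValuationRing (@Localization.AtPrime D _ P hP))
    (P : Ideal D) (hP : P.IsPrime) (hP0 : P ≠ ⊥) (hPsq : P ≠ P ^ 2)
    (Q : Ideal D) (hQ : Q = ⨅ n ≥ 1, P ^ n) :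
    Q.IsPrime ∧ Q < P ∧ ∀ Q' : Ideal D, Q'.IsPrime → Q' < P → Q' ≤ Q :=
  inf_pow_prime_of_prufer_general D hPruf P hP hPsq Q hQ
end

section
/- Let D be a Prüfer domain and let P be a nonzero prime ideal of D with P ≠ P², and set Q := ⋂_{n ≥ 1} Pⁿ. Then the quotient D_P/QD_P of the localization D_P by the extension of Q is a discrete valuation ring (a Noetherian valuation domain, equivalently a one-dimensional valuation domain whose maximal ideal is not idempotent). -/
/-!
In a Prüfer domain the powers of a prime `P` are `P`-primary, because this can be checked in the
localizations at maximal ideals, which are valuation domains. So each `Pⁿ` is contracted from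
`D_P`; hence `M = P D_P` is not idempotent and `Q D_P = ⋂ Mⁿ`. In the valuation domain `D_P` any
`t ∈ M \ M²` generates `M`, and then every element outside `⋂ Mⁿ` is a unit times a power of `t`.
This makes `⋂ Mⁿ` prime and the quotient a DVR with uniformizer the image of `t`.
-/

open IsLocalRing

namespace IsLocalRing

variable {R : Type*} [CommRing R] [IsLocalRing R] {t : R}

theorem associated_pow_of_mem_span_pow_of_notMem_span_pow_succ
    (ht : maximalIdeal R = Ideal.span {t}) {x : R} {n : ℕ}
    (hx : x ∈ Ideal.span {t ^ n}) (hx' : x ∉ Ideal.span {t ^ (n + 1)}) :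
    Associated (t ^ n) x := by
  obtain ⟨u, rfl⟩ := Ideal.mem_span_singleton'.mp hx
  have hu : IsUnit u := by
    by_contra hu
    obtain ⟨v, rfl⟩ := Ideal.mem_span_singleton'.mp (ht ▸ (mem_maximalIdeal u).mpr hu)
    exact hx' (Ideal.mem_span_singleton'.mpr ⟨v, by ring⟩)
  exact ⟨hu.unit, mul_comm _ _⟩

theorem exists_associated_pow_of_notMem_iInf_pow
    (ht : maximalIdeal R = Ideal.span {t}) {x : R} (hx : x ∉ ⨅ n, maximalIdeal R ^ n) :
    ∃ n, Associated (t ^ n) x := by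
  by_contra! hne
  refine hx (Ideal.mem_iInf.mpr fun n ↦ ?_)
  rw [ht, Ideal.span_singleton_pow]
  induction n with
  | zero => simp
  | succ n ih =>
    by_contra h
    exact hne n (associated_pow_of_mem_span_pow_of_notMem_span_pow_succ ht ih h)

variable [IsDomain R]

theorem pow_notMem_maximalIdeal_pow_succ (ht : maximalIdeal R = Ideal.span {t}) (ht0 : t ≠ 0)
    (n : ℕ) : t ^ n ∉ maximalIdeal R ^ (n + 1) := by
  intro h
  rw [ht, Ideal.span_singleton_pow, Ideal.mem_span_singleton] at h
  obtain ⟨c, hc⟩ := h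
  have htu : ¬IsUnit t := (mem_maximalIdeal t).mp (ht ▸ Ideal.mem_span_singleton_self t)
  refine htu (IsUnit.of_mul_eq_one c (mul_left_cancel₀ (pow_ne_zero n ht0) ?_))
  rw [mul_one, ← mul_assoc, ← pow_succ, ← hc]

theorem isPrime_iInf_maximalIdeal_pow (ht : maximalIdeal R = Ideal.span {t}) (ht0 : t ≠ 0) :
    (⨅ n, maximalIdeal R ^ n).IsPrime := by
  refine Ideal.isPrime_iff.mpr ⟨ne_top_of_le_ne_top (maximalIdeal.isMaximal R).ne_top
    ((iInf_le _ 1).trans (pow_one _).le), fun {x y} hxy ↦ ?_⟩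
  by_contra! hxy'
  obtain ⟨a, ha⟩ := exists_associated_pow_of_notMem_iInf_pow ht hxy'.1
  obtain ⟨b, hb⟩ := exists_associated_pow_of_notMem_iInf_pow ht hxy'.2
  exact pow_notMem_maximalIdeal_pow_succ ht ht0 (a + b) <|
    Ideal.mem_of_dvd _ (pow_add t a b ▸ ha.mul_mul hb).symm.dvd (Ideal.mem_iInf.mp hxy _)

theorem isDiscreteValuationRing_quotient_iInf_maximalIdeal_pow
    (ht : maximalIdeal R = Ideal.span {t}) (ht0 : t ≠ 0) :
    ∃ _ : IsDomain (R ⧸ ⨅ n, maximalIdeal R ^ n),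
      IsDiscreteValuationRing (R ⧸ ⨅ n, maximalIdeal R ^ n) := by
  set J := ⨅ n, maximalIdeal R ^ n
  have := isPrime_iInf_maximalIdeal_pow ht ht0
  have := IsLocalRing.of_surjective' (Ideal.Quotient.mk J) Ideal.Quotient.mk_surjective
  refine ⟨inferInstance, .ofHasUnitMulPowIrreducibleFactorization ⟨Ideal.Quotient.mk J t, ?_, ?_⟩⟩
  · refine IsDiscreteValuationRing.irreducible_of_span_eq_maximalIdeal _ ?_ ?_
    · rw [ne_eq, Ideal.Quotient.eq_zero_iff_mem, Ideal.mem_iInf, not_forall]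
      exact ⟨2, pow_one t ▸ pow_notMem_maximalIdeal_pow_succ ht ht0 1⟩
    · rw [← map_maximalIdeal_of_surjective _ Ideal.Quotient.mk_surjective, ht, Ideal.map_span,
        Set.image_singleton]
  · intro x hx
    obtain ⟨a, rfl⟩ := Ideal.Quotient.mk_surjective x
    obtain ⟨n, hn⟩ := exists_associated_pow_of_notMem_iInf_pow ht
      (mt Ideal.Quotient.eq_zero_iff_mem.mpr hx)
    exact ⟨n, map_pow (Ideal.Quotient.mk J) t n ▸ hn.map _⟩

end IsLocalRing

namespace ValuationRing

variable {R : Type*} [CommRing R] [IsDomain R] [ValuationRing R]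

theorem maximalIdeal_eq_span_of_notMem_sq {t : R} (ht : t ∈ maximalIdeal R)
    (ht' : t ∉ maximalIdeal R ^ 2) : maximalIdeal R = Ideal.span {t} := by
  refine le_antisymm (fun u hu ↦ ?_) ((Ideal.span_singleton_le_iff_mem _).mpr ht)
  rw [Ideal.mem_span_singleton]
  obtain h | ⟨c, rfl⟩ := ValuationRing.dvd_total t u
  · exact h
  have hc : IsUnit c := by
    by_contra hc
    exact ht' (pow_two (maximalIdeal R) ▸ Ideal.mul_mem_mul hu ((mem_maximalIdeal c).mpr hc))
  exact (associated_mul_unit_right u c hc).symm.dvd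

theorem le_span_singleton_mul_of_notMem_s11 {p : Ideal R} [hp : p.IsPrime] {s : R} (hs : s ∉ p) :
    p ≤ Ideal.span {s} * p := by
  intro x hx
  obtain ⟨c, rfl⟩ | ⟨c, rfl⟩ := ValuationRing.dvd_total s x
  · exact Ideal.mul_mem_mul (Ideal.mem_span_singleton_self s)
      ((hp.mem_or_mem hx).resolve_left hs)
  · exact absurd (p.mul_mem_right c hx) hs

theorem mem_pow_of_mul_mem_pow_s11 {p : Ideal R} [p.IsPrime] {s a : R} (hs : s ∉ p) {n : ℕ}
    (h : a * s ∈ p ^ n) : a ∈ p ^ n := by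
  obtain _ | m := n
  · simp
  have hle : p ^ (m + 1) ≤ Ideal.span {s} * p ^ (m + 1) :=
    calc p ^ (m + 1) = p ^ m * p := pow_succ p m
      _ ≤ p ^ m * (Ideal.span {s} * p) := Ideal.mul_mono_right (le_span_singleton_mul_of_notMem_s11 hs)
      _ = Ideal.span {s} * p ^ (m + 1) := by ring
  obtain ⟨y, hy, hya⟩ := Ideal.mem_span_singleton_mul.mp (hle h)
  have hs0 : s ≠ 0 := fun h0 ↦ hs (h0 ▸ p.zero_mem)
  rwa [mul_left_cancel₀ hs0 (hya.trans (mul_comm a s))] at hy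

end ValuationRing

section Localization

variable {D : Type*} [CommRing D] [IsDomain D]

theorem Ideal.isPrimary_pow_of_valuationRing_atMaximal
    (hV : ∀ (m : Ideal D) [m.IsMaximal], ValuationRing (Localization.AtPrime m))
    (P : Ideal D) [hP : P.IsPrime] {n : ℕ} (hn : n ≠ 0) : (P ^ n).IsPrimary := by
  refine Ideal.isPrimary_iff.mpr ⟨ne_top_of_le_ne_top hP.ne_top (Ideal.pow_le_self hn),
    fun {a s} h ↦ or_iff_not_imp_right.mpr fun hs ↦ ?_⟩
  rw [Ideal.radical_pow P hn, hP.radical] at hs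
  refine Ideal.mem_of_localization_maximal fun m hm ↦ ?_
  set S := Localization.AtPrime m
  set f := algebraMap D S
  by_cases hPm : P ≤ m
  · have hdisj : Disjoint (m.primeCompl : Set D) P :=
      Set.disjoint_left.mpr fun _ hx hxP ↦ hx (hPm hxP)
    have := IsLocalization.isPrime_of_isPrime_disjoint m.primeCompl S P hP hdisj
    have hs' : f s ∉ P.map f := fun hmem ↦ hs <| by
      rwa [← IsLocalization.under_map_of_isPrime_disjoint m.primeCompl S hP hdisj]
    have := hV m
    have hmem := Ideal.mem_map_of_mem f h
    rw [map_mul, Ideal.map_pow] at hmem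
    rw [Ideal.map_pow]
    exact ValuationRing.mem_pow_of_mul_mem_pow_s11 hs' hmem
  · obtain ⟨u, huP, hum⟩ := SetLike.not_le_iff_exists.mp hPm
    rw [Ideal.eq_top_of_isUnit_mem _ (Ideal.mem_map_of_mem f (Ideal.pow_mem_pow huP n))
      (IsLocalization.map_units _ (⟨u ^ n, pow_mem hum n⟩ : m.primeCompl))]
    trivial

theorem Localization.AtPrime.comap_maximalIdeal_pow_of_valuationRing_atMaximal
    (hV : ∀ (m : Ideal D) [m.IsMaximal], ValuationRing (Localization.AtPrime m))
    (P : Ideal D) [P.IsPrime] (n : ℕ) :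
    (maximalIdeal (Localization.AtPrime P) ^ n).comap (algebraMap D _) = P ^ n := by
  obtain _ | n := n
  · simp
  rw [← Localization.AtPrime.map_eq_maximalIdeal, ← Ideal.map_pow]
  exact IsLocalization.under_map_of_isPrimary_disjoint P.primeCompl _
    (Ideal.isPrimary_pow_of_valuationRing_atMaximal hV P n.succ_ne_zero)
    (Set.disjoint_left.mpr fun _ hx hxP ↦ hx (Ideal.pow_le_self n.succ_ne_zero hxP))

end Localization

theorem Ideal.iInf_pow_of_one_le_eq_iInf_pow {R : Type*} [CommSemiring R] (I : Ideal R) :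
    ⨅ n ≥ 1, I ^ n = ⨅ n, I ^ n := by
  refine le_antisymm (le_iInf fun n ↦ ?_) (le_iInf₂ fun n _ ↦ iInf_le _ n)
  obtain _ | n := n
  · simp
  · exact iInf₂_le (n + 1) n.succ_pos

theorem localization_quotient_is_DVR_general (D : Type*) [CommRing D] [IsDomain D]
    (hPruf : ∀ (P : Ideal D) (hP : P.IsPrime),
      ValuationRing (@Localization.AtPrime D _ P hP))
    (P : Ideal D) [hP : P.IsPrime] (hPsq : P ≠ P ^ 2)
    (Q : Ideal D) (hQ : Q = ⨅ n ≥ 1, P ^ n) :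
    ∃ hdom : IsDomain
        (Localization.AtPrime P ⧸ Q.map (algebraMap D (Localization.AtPrime P))),
      @IsDiscreteValuationRing
        (Localization.AtPrime P ⧸ Q.map (algebraMap D (Localization.AtPrime P)))
        _ hdom := by
  set R := Localization.AtPrime P
  have := hPruf P hP
  have hcomap := Localization.AtPrime.comap_maximalIdeal_pow_of_valuationRing_atMaximal
    (fun m _ ↦ hPruf m inferInstance) P
  obtain ⟨t, htM, htM2⟩ : ∃ t ∈ maximalIdeal R, t ∉ maximalIdeal R ^ 2 := by
    refine SetLike.not_le_iff_exists.mp fun hle ↦ hPsq ?_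
    rw [← hcomap 2, ← le_antisymm hle (Ideal.pow_le_self two_ne_zero), ← pow_one (maximalIdeal R),
      hcomap, pow_one]
  have hQ' : Q.map (algebraMap D R) = ⨅ n, maximalIdeal R ^ n := by
    rw [hQ, Ideal.iInf_pow_of_one_le_eq_iInf_pow, ← funext hcomap, ← Ideal.comap_iInf,
      IsLocalization.map_under P.primeCompl]
  rw [hQ']
  exact IsLocalRing.isDiscreteValuationRing_quotient_iInf_maximalIdeal_pow
    (ValuationRing.maximalIdeal_eq_span_of_notMem_sq htM htM2) (by rintro rfl; simp at htM2)

/-- Let `D` be a Prüfer domain (an integral domain all of whose localizations at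
primes are valuation domains), `P` a nonzero non-idempotent prime ideal, and
`Q = ⋂_{n ≥ 1} Pⁿ`. Then the quotient `D_P/QD_P` of the localization `D_P` by the
extension of `Q` is a discrete valuation ring. -/
theorem localization_quotient_is_DVR (D : Type*) [CommRing D] [IsDomain D]
    (hPruf : ∀ (P : Ideal D) (hP : P.IsPrime),
      ValuationRing (@Localization.AtPrime D _ P hP))
    (P : Ideal D) [hP : P.IsPrime] (hP0 : P ≠ ⊥) (hPsq : P ≠ P ^ 2)
    (Q : Ideal D) (hQ : Q = ⨅ n ≥ 1, P ^ n) :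
    ∃ hdom : IsDomain
        (Localization.AtPrime P ⧸ Q.map (algebraMap D (Localization.AtPrime P))),
      @IsDiscreteValuationRing
        (Localization.AtPrime P ⧸ Q.map (algebraMap D (Localization.AtPrime P)))
        _ hdom :=
  localization_quotient_is_DVR_general D hPruf P (hP := hP) hPsq Q hQ
end
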